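/- Let h be an L-Lipschitz NE approximator, i.e., ‖h(u) − h(v)‖₁ ≤ L·‖u − v‖max for all game utilities u, v ∈ U, with L > 0. Let ν, μ > 0, let u, v ∈ U be game utilities with ‖u − v‖max ≤ ν, and let π be a mixed strategy profile with ‖h(v) − π‖₁ ≤ μ. Then |NashApr(h(u), u) − NashApr(π, u)| ≤ 2·L·ν + 2·μ. -/

import Mathlib

open Finset MeasureTheory

section NashDefs

variable {N : Type*} {A : N → Type*}

/-- `σ` is a mixed strategy profile: each `σ i` is a probability distribution on `A i`. -/
def IsMixedProfile [∀ i, Fintype (A i)] (σ : ∀ i, A i → ℝ) : Prop :=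
  (∀ i a, 0 ≤ σ i a) ∧ ∀ i, ∑ a, σ i a = 1

/-- Expected utility of player `i` when the mixed strategy profile `σ` is played:
`u_i(σ) = ∑_{a ∈ A} (∏_j σ_j(a_j)) u_i(a)`. -/
def expUtil [Fintype N] [DecidableEq N] [∀ i, Fintype (A i)]
    (u : N → (∀ j, A j) → ℝ) (i : N) (σ : ∀ j, A j → ℝ) : ℝ :=
  ∑ a : ∀ j, A j, (∏ j, σ j (a j)) * u i a

/-- The pure strategy of player `i` playing action `b` with probability one. -/
def pureStrat [∀ i, DecidableEq (A i)] {i : N} (b : A i) : A i → ℝ :=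
  fun c => if c = b then 1 else 0

/-- Nash approximation loss:
`NashApr(σ, u) = max_{i ∈ N} max_{b ∈ A_i} [u_i(b, σ_{-i}) - u_i(σ)]`. -/
noncomputable def nashApr [Fintype N] [DecidableEq N] [Nonempty N]
    [∀ i, Fintype (A i)] [∀ i, DecidableEq (A i)] [∀ i, Nonempty (A i)]
    (σ : ∀ i, A i → ℝ) (u : N → (∀ j, A j) → ℝ) : ℝ :=
  Finset.univ.sup' Finset.univ_nonempty fun i : N =>
    Finset.univ.sup' Finset.univ_nonempty fun b : A i =>
      expUtil u i (Function.update σ i (pureStrat b)) - expUtil u i σ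

/-- ℓ1-distance between mixed strategy profiles:
`‖σ - σ'‖₁ = ∑_{i ∈ N} ∑_{a_i ∈ A_i} |σ_i(a_i) - σ'_i(a_i)|`. -/
def dist1 [Fintype N] [∀ i, Fintype (A i)] (σ σ' : ∀ i, A i → ℝ) : ℝ :=
  ∑ i, ∑ a, |σ i a - σ' i a|

/-- ℓmax-distance between game utilities:
`‖u - v‖max = max_{i ∈ N} max_{a ∈ A} |u_i(a) - v_i(a)|`. -/
noncomputable def distMax [Fintype N] [DecidableEq N] [Nonempty N]
    [∀ i, Fintype (A i)] [∀ i, Nonempty (A i)]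
    (u v : N → (∀ j, A j) → ℝ) : ℝ :=
  Finset.univ.sup' Finset.univ_nonempty fun i : N =>
    Finset.univ.sup' Finset.univ_nonempty fun a : ∀ j, A j => |u i a - v i a|

end NashDefs

/-- The set of all game utilities (with values in `[0,1]`) for fixed players `N`
and action space `A`, as a subtype. -/
abbrev GameUtil (N : Type*) (A : N → Type*) : Type _ :=
  {u : N → (∀ j, A j) → ℝ // ∀ i a, u i a ∈ Set.Icc (0 : ℝ) 1}

/-- An NE approximator maps game utilities to mixed strategy profiles. -/
abbrev NEApprox (N : Type*) (A : N → Type*) [∀ i, Fintype (A i)] : Type _ :=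
  {h : GameUtil N A → ∀ i, A i → ℝ // ∀ u, IsMixedProfile (h u)}

section Risk

variable {N : Type*} {A : N → Type*} [Fintype N] [DecidableEq N] [Nonempty N]
  [∀ i, Fintype (A i)] [∀ i, DecidableEq (A i)] [∀ i, Nonempty (A i)]

/-- Nash approximation loss of an NE approximator on a game. -/
noncomputable def nashLoss (h : NEApprox N A) (u : GameUtil N A) : ℝ :=
  nashApr (h.1 u) u.1

/-- True risk `L_D(h) = E_{u ∼ D}[NashApr(h(u), u)]`. -/
noncomputable def trueRisk (D : Measure (GameUtil N A)) (h : NEApprox N A) : ℝ :=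
  ∫ u, nashLoss h u ∂D

/-- Empirical risk `L_S(h) = (1/m) ∑_j NashApr(h(u⁽ʲ⁾), u⁽ʲ⁾)`. -/
noncomputable def empRisk {m : ℕ} (S : Fin m → GameUtil N A) (h : NEApprox N A) : ℝ :=
  (1 / (m : ℝ)) * ∑ j, nashLoss h (S j)

/-- `C` `r`-covers `H` under the `ℓ_{∞,1}`-distance:
every `h ∈ H` is within `ℓ_{∞,1}`-distance `r` of some `g ∈ C`. -/
def Covers (r : ℝ) (C : Finset (NEApprox N A)) (H : Set (NEApprox N A)) : Prop :=
  ∀ h ∈ H, ∃ g ∈ C, ∀ u, dist1 (h.1 u) (g.1 u) ≤ r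

end Risk

/-!
The expected utility of a game with payoffs in `[-1, 1]` is `1`-Lipschitz in the mixed profile
for the `ℓ1`-distance: switching the players one at a time, each switch costs at most the
`ℓ1`-distance of that player's strategies, because the other players' strategies are probability
distributions. The Nash approximation loss is a maximum of differences of two such expected
utilities, hence `2`-Lipschitz. Finally `‖h(u) - π‖₁ ≤ ‖h(u) - h(v)‖₁ + ‖h(v) - π‖₁ ≤ L ν + μ`.
-/

section Dist1

variable {N : Type*} {A : N → Type*} [Fintype N] [∀ i, Fintype (A i)]

lemma dist1_comm (σ π : ∀ i, A i → ℝ) : dist1 σ π = dist1 π σ := by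
  simp only [dist1, abs_sub_comm]

lemma dist1_triangle (σ τ π : ∀ i, A i → ℝ) : dist1 σ π ≤ dist1 σ τ + dist1 τ π := by
  simp only [dist1, ← Finset.sum_add_distrib]
  gcongr with i _ a _
  exact abs_sub_le _ _ _

lemma dist1_update_le [DecidableEq N] (σ π : ∀ i, A i → ℝ) (k : N) (p : A k → ℝ) :
    dist1 (Function.update σ k p) (Function.update π k p) ≤ dist1 σ π := by
  refine Finset.sum_le_sum fun j _ => ?_
  rcases eq_or_ne j k with rfl | hj
  · simp only [Function.update_self, sub_self, abs_zero, Finset.sum_const_zero]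
    positivity
  · simp only [Function.update_of_ne hj, le_refl]

end Dist1

lemma pureStrat_nonneg {N : Type*} {A : N → Type*} [∀ i, DecidableEq (A i)] {k : N} (b c : A k) :
    0 ≤ pureStrat b c := by
  unfold pureStrat
  split_ifs <;> norm_num

lemma sum_pureStrat {N : Type*} {A : N → Type*} [∀ i, Fintype (A i)] [∀ i, DecidableEq (A i)]
    {k : N} (b : A k) : ∑ c, pureStrat b c = 1 := by
  simp [pureStrat]

section MixedProfile

variable {N : Type*} {A : N → Type*} [DecidableEq N] [∀ i, Fintype (A i)]

lemma IsMixedProfile.update {σ : ∀ i, A i → ℝ} (hσ : IsMixedProfile σ) {k : N} {p : A k → ℝ}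
    (hp₀ : ∀ b, 0 ≤ p b) (hp₁ : ∑ b, p b = 1) : IsMixedProfile (Function.update σ k p) := by
  refine ⟨fun j b => ?_, fun j => ?_⟩ <;> rcases eq_or_ne j k with rfl | hj
  · simpa using hp₀ b
  · simpa [Function.update_of_ne hj] using hσ.1 j b
  · simpa using hp₁
  · simpa [Function.update_of_ne hj] using hσ.2 j

lemma IsMixedProfile.update_pureStrat [∀ i, DecidableEq (A i)] {σ : ∀ i, A i → ℝ}
    (hσ : IsMixedProfile σ) {k : N} (b : A k) :
    IsMixedProfile (Function.update σ k (pureStrat b)) :=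
  hσ.update (pureStrat_nonneg b) (sum_pureStrat b)

lemma IsMixedProfile.piecewise {σ π : ∀ i, A i → ℝ} (hσ : IsMixedProfile σ)
    (hπ : IsMixedProfile π) (s : Finset N) : IsMixedProfile (s.piecewise π σ) := by
  refine ⟨fun j b => ?_, fun j => ?_⟩ <;> by_cases hj : j ∈ s <;>
    simp only [Finset.piecewise_eq_of_mem, Finset.piecewise_eq_of_notMem, hj, not_false_eq_true,
      hσ.1, hπ.1, hσ.2, hπ.2]

end MixedProfile

section ExpUtil

variable {N : Type*} {A : N → Type*} [Fintype N] [DecidableEq N]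

lemma prod_update_apply (τ : ∀ i, A i → ℝ) (k : N) (p : A k → ℝ) (a : ∀ i, A i) :
    ∏ j, Function.update τ k p j (a j) = p (a k) * ∏ j ∈ Finset.univ \ {k}, τ j (a j) := by
  simp only [Function.apply_update (fun j (q : A j → ℝ) => q (a j))]
  exact Finset.prod_update_of_mem (Finset.mem_univ k) _ _

variable [∀ i, Fintype (A i)]

lemma sum_prod_update {τ : ∀ i, A i → ℝ} (hτ : IsMixedProfile τ) (k : N) (p : A k → ℝ) :
    ∑ a : ∀ i, A i, ∏ j, Function.update τ k p j (a j) = ∑ b, p b := by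
  rw [← Fintype.prod_sum, Fintype.prod_eq_single k fun j hj => ?_]
  · simp only [Function.update_self]
  · simpa only [Function.update_of_ne hj] using hτ.2 j

lemma abs_expUtil_update_sub_le {τ : ∀ i, A i → ℝ} (hτ : IsMixedProfile τ)
    (u : N → (∀ j, A j) → ℝ) (i : N) (hu : ∀ a, |u i a| ≤ 1) (k : N) (p q : A k → ℝ) :
    |expUtil u i (Function.update τ k p) - expUtil u i (Function.update τ k q)|
      ≤ ∑ b, |p b - q b| := by
  have hrest : ∀ a : ∀ j, A j, 0 ≤ ∏ j ∈ Finset.univ \ {k}, τ j (a j) :=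
    fun a => Finset.prod_nonneg fun j _ => hτ.1 j (a j)
  calc |expUtil u i (Function.update τ k p) - expUtil u i (Function.update τ k q)|
      = |∑ a : ∀ j, A j, (p (a k) - q (a k)) * (∏ j ∈ Finset.univ \ {k}, τ j (a j)) * u i a| := by
        simp only [expUtil, prod_update_apply, ← Finset.sum_sub_distrib]
        congr 1
        refine Finset.sum_congr rfl fun a _ => by ring
    _ ≤ ∑ a : ∀ j, A j, |p (a k) - q (a k)| * ∏ j ∈ Finset.univ \ {k}, τ j (a j) := by
        refine (Finset.abs_sum_le_sum_abs _ _).trans (Finset.sum_le_sum fun a _ => ?_)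
        rw [abs_mul, abs_mul, abs_of_nonneg (hrest a)]
        exact mul_le_of_le_one_right (mul_nonneg (abs_nonneg _) (hrest a)) (hu a)
    _ = ∑ b, |p b - q b| := by
        simp only [← prod_update_apply τ k (fun b => |p b - q b|), sum_prod_update hτ]

-- Hybrid argument: the players switch from `σ` to `π` one at a time.
lemma abs_expUtil_sub_le_dist1 {σ π : ∀ i, A i → ℝ} (hσ : IsMixedProfile σ)
    (hπ : IsMixedProfile π) (u : N → (∀ j, A j) → ℝ) (i : N) (hu : ∀ a, |u i a| ≤ 1) :
    |expUtil u i σ - expUtil u i π| ≤ dist1 σ π := by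
  suffices hybrid : ∀ s : Finset N,
      |expUtil u i σ - expUtil u i (s.piecewise π σ)| ≤ ∑ j ∈ s, ∑ b, |σ j b - π j b| by
    simpa only [Finset.piecewise_univ, dist1] using hybrid Finset.univ
  intro s
  induction s using Finset.induction_on with
  | empty => simp
  | insert k s hks ih =>
    have hstep := abs_expUtil_update_sub_le (hσ.piecewise hπ s) u i hu k (σ k) (π k)
    rw [Function.update_eq_self_iff.2 (s.piecewise_eq_of_notMem π σ hks).symm,
      ← Finset.piecewise_insert] at hstep
    calc |expUtil u i σ - expUtil u i ((insert k s).piecewise π σ)|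
        ≤ |expUtil u i σ - expUtil u i (s.piecewise π σ)|
          + |expUtil u i (s.piecewise π σ) - expUtil u i ((insert k s).piecewise π σ)| :=
          abs_sub_le _ _ _
      _ ≤ ∑ j ∈ s, ∑ b, |σ j b - π j b| + ∑ b, |σ k b - π k b| := add_le_add ih hstep
      _ = ∑ j ∈ insert k s, ∑ b, |σ j b - π j b| := by rw [Finset.sum_insert hks, add_comm]

end ExpUtil

section NashApr

variable {N : Type*} {A : N → Type*} [Fintype N] [DecidableEq N] [Nonempty N]
  [∀ i, Fintype (A i)] [∀ i, DecidableEq (A i)] [∀ i, Nonempty (A i)]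

-- The deviation payoff and the current payoff each move by at most `‖σ - π‖₁`.
lemma nashApr_le_add_two_mul_dist1 {σ π : ∀ i, A i → ℝ} (hσ : IsMixedProfile σ)
    (hπ : IsMixedProfile π) (u : N → (∀ j, A j) → ℝ) (hu : ∀ i a, |u i a| ≤ 1) :
    nashApr σ u ≤ nashApr π u + 2 * dist1 σ π := by
  refine Finset.sup'_le _ _ fun i _ => Finset.sup'_le _ _ fun b _ => ?_
  have hdev := (abs_le.1 (abs_expUtil_sub_le_dist1 (hσ.update_pureStrat b)
    (hπ.update_pureStrat b) u i (hu i))).2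
  have hcur := (abs_le.1 (abs_expUtil_sub_le_dist1 hσ hπ u i (hu i))).1
  have hupd := dist1_update_le σ π i (pureStrat b)
  have hle : expUtil u i (Function.update π i (pureStrat b)) - expUtil u i π ≤ nashApr π u :=
    Finset.le_sup'_of_le _ (Finset.mem_univ i) (Finset.le_sup' (fun b : A i =>
      expUtil u i (Function.update π i (pureStrat b)) - expUtil u i π) (Finset.mem_univ b))
  linarith

lemma abs_nashApr_sub_le_two_mul_dist1 {σ π : ∀ i, A i → ℝ} (hσ : IsMixedProfile σ)
    (hπ : IsMixedProfile π) (u : N → (∀ j, A j) → ℝ) (hu : ∀ i a, |u i a| ≤ 1) :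
    |nashApr σ u - nashApr π u| ≤ 2 * dist1 σ π := by
  have h₁ := nashApr_le_add_two_mul_dist1 hσ hπ u hu
  have h₂ := nashApr_le_add_two_mul_dist1 hπ hσ u hu
  rw [dist1_comm] at h₂
  exact abs_sub_le_iff.2 ⟨by linarith, by linarith⟩

end NashApr

lemma GameUtil.abs_le_one {N : Type*} {A : N → Type*} (u : GameUtil N A) (i : N) (a : ∀ j, A j) :
    |u.1 i a| ≤ 1 :=
  abs_le.2 ⟨by linarith [(u.2 i a).1], (u.2 i a).2⟩

theorem lipschitz_approximator_perturbation_bound_general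
    {N : Type*} [Fintype N] [DecidableEq N] [Nonempty N]
    {A : N → Type*} [∀ i, Fintype (A i)] [∀ i, DecidableEq (A i)] [∀ i, Nonempty (A i)]
    (h : NEApprox N A) (L : ℝ) (hL : 0 < L)
    (hlip : ∀ u v : GameUtil N A, dist1 (h.1 u) (h.1 v) ≤ L * distMax u.1 v.1)
    (ν μ : ℝ)
    (u v : GameUtil N A) (huv : distMax u.1 v.1 ≤ ν)
    (π : ∀ i, A i → ℝ) (hπ : IsMixedProfile π) (hπclose : dist1 (h.1 v) π ≤ μ) :
    |nashApr (h.1 u) u.1 - nashApr π u.1| ≤ 2 * L * ν + 2 * μ := by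
  have hclose : dist1 (h.1 u) π ≤ L * ν + μ :=
    calc dist1 (h.1 u) π ≤ dist1 (h.1 u) (h.1 v) + dist1 (h.1 v) π := dist1_triangle _ _ _
      _ ≤ L * ν + μ :=
        add_le_add ((hlip u v).trans (mul_le_mul_of_nonneg_left huv hL.le)) hπclose
  calc |nashApr (h.1 u) u.1 - nashApr π u.1| ≤ 2 * dist1 (h.1 u) π :=
        abs_nashApr_sub_le_two_mul_dist1 (h.2 u) hπ u.1 u.abs_le_one
    _ ≤ 2 * (L * ν + μ) := by gcongr
    _ = 2 * L * ν + 2 * μ := by ring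

theorem lipschitz_approximator_perturbation_bound
    {N : Type*} [Fintype N] [DecidableEq N] [Nonempty N]
    {A : N → Type*} [∀ i, Fintype (A i)] [∀ i, DecidableEq (A i)] [∀ i, Nonempty (A i)]
    (h : NEApprox N A) (L : ℝ) (hL : 0 < L)
    (hlip : ∀ u v : GameUtil N A, dist1 (h.1 u) (h.1 v) ≤ L * distMax u.1 v.1)
    (ν μ : ℝ) (hν : 0 < ν) (hμ : 0 < μ)
    (u v : GameUtil N A) (huv : distMax u.1 v.1 ≤ ν)
    (π : ∀ i, A i → ℝ) (hπ : IsMixedProfile π) (hπclose : dist1 (h.1 v) π ≤ μ) :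
    |nashApr (h.1 u) u.1 - nashApr π u.1| ≤ 2 * L * ν + 2 * μ :=
  lipschitz_approximator_perturbation_bound_general h L hL hlip ν μ u v huv π hπ hπclose
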